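/- arXiv:1412.0833 — 11 statements merged into one kernel-verified Lean document; each statement's English description precedes it below -/
import Mathlib

section
/- Let I : ℝ^K → ℝ^K be a contractive interference function with modulus c ∈ [0,1) and weight vector v > 0. Then I is a contraction mapping with respect to the weighted maximum norm with weight v and contraction modulus c; that is, for all componentwise-nonnegative p, p′ ∈ ℝ^K, ‖I(p) − I(p′)‖_∞^v ≤ c · ‖p − p′‖_∞^v. -/
open scoped BigOperators

/-- A contractive interference function is a contraction mapping w.r.t. the
weighted maximum norm `‖x‖_∞^v = ⨆ i, |x i| / v i`, with modulus `c`. -/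
theorem stmt0 (K : ℕ) (I : (Fin K → ℝ) → (Fin K → ℝ)) (c : ℝ) (v : Fin K → ℝ)
    (hc0 : 0 ≤ c) (hc1 : c < 1) (hv : ∀ i, 0 < v i)
    (hpos : ∀ p : Fin K → ℝ, 0 ≤ p → 0 ≤ I p)
    (hmono : ∀ p p' : Fin K → ℝ, 0 ≤ p → p ≤ p' → I p ≤ I p')
    (hcontr : ∀ p : Fin K → ℝ, 0 ≤ p → ∀ α : ℝ, 0 < α → I (p + α • v) ≤ I p + (c * α) • v) :
    ∀ p p' : Fin K → ℝ, 0 ≤ p → 0 ≤ p' →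
      (⨆ i, |I p i - I p' i| / v i) ≤ c * ⨆ i, |p i - p' i| / v i := by
  intro p p' hp hp'
  rcases Nat.eq_zero_or_pos K with hK | hK
  · subst hK
    simp
  have hne : Nonempty (Fin K) := ⟨⟨0, hK⟩⟩
  set M := ⨆ i, |p i - p' i| / v i with hM
  have hbdd : ∀ i, |p i - p' i| / v i ≤ M := fun i =>
    le_ciSup (f := fun i => |p i - p' i| / v i) (Set.Finite.bddAbove (Set.finite_range _)) i
  have hM0 : 0 ≤ M := le_trans (div_nonneg (abs_nonneg _) (hv _).le) (hbdd (Classical.arbitrary _))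
  have key : ∀ i, |p i - p' i| ≤ M * v i := fun i => by
    have h := hbdd i
    rwa [div_le_iff₀ (hv i)] at h
  rcases eq_or_lt_of_le hM0 with hMeq | hMpos
  · have hpp : p = p' := funext fun i => by
      have h := key i
      rw [← hMeq, zero_mul] at h
      have h2 := abs_nonneg (p i - p' i)
      have : p i - p' i = 0 := abs_eq_zero.mp (le_antisymm h h2)
      linarith
    subst hpp
    simp only [sub_self, abs_zero, zero_div, ciSup_const]
    exact mul_nonneg hc0 hM0
  · have h1 : p ≤ p' + M • v := fun i => by
      have h := key i
      have h2 := le_abs_self (p i - p' i)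
      simp only [Pi.add_apply, Pi.smul_apply, smul_eq_mul]
      linarith
    have h2 : p' ≤ p + M • v := fun i => by
      have h := key i
      have h2 := neg_abs_le (p i - p' i)
      simp only [Pi.add_apply, Pi.smul_apply, smul_eq_mul]
      linarith
    have hI1 : I p ≤ I p' + (c * M) • v :=
      le_trans (hmono p (p' + M • v) hp h1) (hcontr p' hp' M hMpos)
    have hI2 : I p' ≤ I p + (c * M) • v :=
      le_trans (hmono p' (p + M • v) hp' h2) (hcontr p hp M hMpos)
    apply ciSup_le
    intro i
    rw [div_le_iff₀ (hv i)]
    have a1 := hI1 i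
    have a2 := hI2 i
    simp only [Pi.add_apply, Pi.smul_apply, smul_eq_mul] at a1 a2
    rw [abs_le]
    constructor <;> [linarith; linarith]
end

section
/- Let I : ℝ^K → ℝ^K be a contractive interference function with modulus c ∈ [0,1) and weight vector v > 0. Then I has a unique fixed point p* in the nonnegative orthant {p ∈ ℝ^K : p ≥ 0}, and for every starting point p(0) ≥ 0 the iterates p(k+1) = I(p(k)) converge to p* as k → ∞. -/
/-!
In the coordinates `y = p / v` the interference function becomes `J y = I (y * v) / v`, which is a
contraction with constant `c` for the sup metric on the nonnegative orthant: if `|p - q| ≤ α v`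
componentwise then `q ≤ p + α v`, so monotonicity and contractivity give `I q ≤ I p + c α v`, and
symmetrically. The orthant is closed, hence complete, and the Banach fixed point theorem yields the
fixed point, its uniqueness and the convergence of the iteration.
-/

section

open Filter Set Topology NNReal Function

theorem exists_isFixedPt_tendsto_iterate_of_dist_le_mul {α : Type*} [MetricSpace α]
    {f : α → α} {s : Set α} {K : ℝ≥0} (hK : K < 1) (hs : IsComplete s) (hne : s.Nonempty)
    (hsf : MapsTo f s s) (hf : ∀ x ∈ s, ∀ y ∈ s, dist (f x) (f y) ≤ K * dist x y) :
    ∃ y ∈ s, IsFixedPt f y ∧ (∀ z ∈ s, IsFixedPt f z → z = y) ∧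
      ∀ x ∈ s, Tendsto (fun n ↦ f^[n] x) atTop (𝓝 y) := by
  have hcontr : ContractingWith K (hsf.restrict f s s) :=
    ⟨hK, LipschitzWith.of_dist_le_mul fun x y ↦ hf x x.2 y y.2⟩
  have unique : ∀ y ∈ s, ∀ z ∈ s, IsFixedPt f y → IsFixedPt f z → z = y := fun y hy z hz hfy hfz ↦
    congrArg Subtype.val <|
      hcontr.fixedPoint_unique' (x := ⟨z, hz⟩) (y := ⟨y, hy⟩) (Subtype.ext hfz) (Subtype.ext hfy)
  obtain ⟨x₀, hx₀⟩ := hne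
  obtain ⟨y, hy, hfy, -⟩ := hcontr.exists_fixedPoint' hs hsf hx₀ (edist_ne_top _ _)
  refine ⟨y, hy, hfy, fun z hz hfz ↦ unique y hy z hz hfy hfz, fun x hx ↦ ?_⟩
  obtain ⟨y', hy', hfy', hlim, -⟩ := hcontr.exists_fixedPoint' hs hsf hx (edist_ne_top _ _)
  rwa [unique y hy y' hy' hfy hfy'] at hlim

section Interference

variable {ι : Type*} {I : (ι → ℝ) → (ι → ℝ)} {c : ℝ} {v : ι → ℝ}

theorem interference_le_add_smul_of_le_add_smul
    (hmono : ∀ p p' : ι → ℝ, 0 ≤ p → p ≤ p' → I p ≤ I p')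
    (hcontr : ∀ p : ι → ℝ, 0 ≤ p → ∀ α : ℝ, 0 < α → I (p + α • v) ≤ I p + (c * α) • v)
    {p q : ι → ℝ} (hp : 0 ≤ p) (hq : 0 ≤ q) {α : ℝ} (hα : 0 ≤ α)
    (hqp : q ≤ p + α • v) : I q ≤ I p + (c * α) • v := by
  rcases hα.eq_or_lt with rfl | hα
  · simp only [zero_smul, add_zero, mul_zero] at hqp ⊢
    exact hmono q p hq hqp
  · exact (hmono q _ hq hqp).trans (hcontr p hp α hα)

theorem abs_interference_sub_le
    (hmono : ∀ p p' : ι → ℝ, 0 ≤ p → p ≤ p' → I p ≤ I p')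
    (hcontr : ∀ p : ι → ℝ, 0 ≤ p → ∀ α : ℝ, 0 < α → I (p + α • v) ≤ I p + (c * α) • v)
    {p q : ι → ℝ} (hp : 0 ≤ p) (hq : 0 ≤ q) {α : ℝ} (hα : 0 ≤ α)
    (hpq : ∀ i, |p i - q i| ≤ α * v i) (i : ι) : |I p i - I q i| ≤ c * α * v i := by
  have hqp : q ≤ p + α • v := fun j ↦ by
    have := (abs_le.mp (hpq j)).1
    simp only [Pi.add_apply, Pi.smul_apply, smul_eq_mul]
    linarith
  have hpq' : p ≤ q + α • v := fun j ↦ by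
    have := (abs_le.mp (hpq j)).2
    simp only [Pi.add_apply, Pi.smul_apply, smul_eq_mul]
    linarith
  have h₁ := interference_le_add_smul_of_le_add_smul hmono hcontr hp hq hα hqp i
  have h₂ := interference_le_add_smul_of_le_add_smul hmono hcontr hq hp hα hpq' i
  simp only [Pi.add_apply, Pi.smul_apply, smul_eq_mul] at h₁ h₂
  rw [abs_le]
  constructor <;> linarith

variable [Fintype ι]

theorem dist_interference_div_le
    (hmono : ∀ p p' : ι → ℝ, 0 ≤ p → p ≤ p' → I p ≤ I p')
    (hcontr : ∀ p : ι → ℝ, 0 ≤ p → ∀ α : ℝ, 0 < α → I (p + α • v) ≤ I p + (c * α) • v)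
    (hc0 : 0 ≤ c) (hv : ∀ i, 0 < v i) {x y : ι → ℝ} (hx : 0 ≤ x) (hy : 0 ≤ y) :
    dist (I (x * v) / v) (I (y * v) / v) ≤ c * dist x y := by
  have hxy : ∀ i, |(x * v) i - (y * v) i| ≤ dist x y * v i := fun i ↦ by
    rw [Pi.mul_apply, Pi.mul_apply, ← sub_mul, abs_mul, abs_of_pos (hv i)]
    exact mul_le_mul_of_nonneg_right (by simpa [Real.dist_eq] using dist_le_pi_dist x y i)
      (hv i).le
  refine (dist_pi_le_iff (by positivity)).2 fun i ↦ ?_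
  have h := abs_interference_sub_le hmono hcontr (mul_nonneg hx fun j ↦ (hv j).le)
    (mul_nonneg hy fun j ↦ (hv j).le) dist_nonneg hxy i
  rw [Real.dist_eq, Pi.div_apply, Pi.div_apply, div_sub_div_same, abs_div, abs_of_pos (hv i),
    div_le_iff₀ (hv i)]
  exact h

end Interference

end

/-- A contractive interference function has a unique fixed point in the nonnegative
orthant, and the fixed-point iteration converges to it from any nonnegative start. -/
theorem stmt1 (K : ℕ) (I : (Fin K → ℝ) → (Fin K → ℝ)) (c : ℝ) (v : Fin K → ℝ)
    (hc0 : 0 ≤ c) (hc1 : c < 1) (hv : ∀ i, 0 < v i)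
    (hpos : ∀ p : Fin K → ℝ, 0 ≤ p → 0 ≤ I p)
    (hmono : ∀ p p' : Fin K → ℝ, 0 ≤ p → p ≤ p' → I p ≤ I p')
    (hcontr : ∀ p : Fin K → ℝ, 0 ≤ p → ∀ α : ℝ, 0 < α → I (p + α • v) ≤ I p + (c * α) • v) :
    ∃ pstar : Fin K → ℝ, 0 ≤ pstar ∧ I pstar = pstar ∧
      (∀ q : Fin K → ℝ, 0 ≤ q → I q = q → q = pstar) ∧
      ∀ p0 : Fin K → ℝ, 0 ≤ p0 →
        Filter.Tendsto (fun k => I^[k] p0) Filter.atTop (nhds pstar) := by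
  have hv' : 0 ≤ v := fun i ↦ (hv i).le
  have div_mul_cancel (p : Fin K → ℝ) : p / v * v = p :=
    funext fun i ↦ div_mul_cancel₀ (p i) (hv i).ne'
  have div_nonneg' {p : Fin K → ℝ} (hp : 0 ≤ p) : 0 ≤ p / v := fun i ↦ div_nonneg (hp i) (hv' i)
  set J : (Fin K → ℝ) → (Fin K → ℝ) := fun y ↦ I (y * v) / v
  have hconj : Function.Semiconj (· * v) J I := fun y ↦ div_mul_cancel _
  obtain ⟨y, hy, hJy, hJuniq, hJlim⟩ :=
    exists_isFixedPt_tendsto_iterate_of_dist_le_mul (f := J) (K := ⟨c, hc0⟩) hc1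
      isClosed_Ici.isComplete Set.nonempty_Ici
      (fun y hy ↦ div_nonneg' (hpos _ (mul_nonneg hy hv')))
      (fun x hx y hy ↦ dist_interference_div_le hmono hcontr hc0 hv hx hy)
  refine ⟨y * v, mul_nonneg hy hv', (hconj y).symm.trans (congrArg (· * v) hJy), ?_, ?_⟩
  · intro q hq hIq
    have hJq : Function.IsFixedPt J (q / v) := by
      change I (q / v * v) / v = q / v
      rw [div_mul_cancel, hIq]
    rw [← div_mul_cancel q, hJuniq _ (div_nonneg' hq) hJq]
  · intro p0 hp0
    have hiter (n : ℕ) : I^[n] p0 = J^[n] (p0 / v) * v := by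
      simpa only [div_mul_cancel] using ((hconj.iterate_right n) (p0 / v)).symm
    simpa only [hiter] using (hJlim _ (div_nonneg' hp0)).mul_const v
end

section
/- Let I : ℝ^K → ℝ^K be a contractive interference function with modulus c ∈ [0,1) and weight vector v > 0, and let p_min, p_max ∈ ℝ^K satisfy 0 ≤ p_min ≤ p_max componentwise. Then the clamped function I^q defined componentwise by I^q(p)_i = max(p_min_i, min(p_max_i, I(p)_i)) is also a contractive interference function with the same modulus c and the same weight vector v. -/
open scoped BigOperators

/-- The clamped version of a contractive interference function is again a
contractive interference function with the same modulus and weight vector. -/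
theorem stmt2 (K : ℕ) (I : (Fin K → ℝ) → (Fin K → ℝ)) (c : ℝ) (v : Fin K → ℝ)
    (hc0 : 0 ≤ c) (hc1 : c < 1) (hv : ∀ i, 0 < v i)
    (hpos : ∀ p : Fin K → ℝ, 0 ≤ p → 0 ≤ I p)
    (hmono : ∀ p p' : Fin K → ℝ, 0 ≤ p → p ≤ p' → I p ≤ I p')
    (hcontr : ∀ p : Fin K → ℝ, 0 ≤ p → ∀ α : ℝ, 0 < α → I (p + α • v) ≤ I p + (c * α) • v)
    (pmin pmax : Fin K → ℝ) (hpmin : 0 ≤ pmin) (hminmax : pmin ≤ pmax) :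
    (∀ p : Fin K → ℝ, 0 ≤ p →
        0 ≤ fun i => max (pmin i) (min (pmax i) (I p i))) ∧
    (∀ p p' : Fin K → ℝ, 0 ≤ p → p ≤ p' →
        (fun i => max (pmin i) (min (pmax i) (I p i))) ≤
          fun i => max (pmin i) (min (pmax i) (I p' i))) ∧
    (∀ p : Fin K → ℝ, 0 ≤ p → ∀ α : ℝ, 0 < α →
        (fun i => max (pmin i) (min (pmax i) (I (p + α • v) i))) ≤
          (fun i => max (pmin i) (min (pmax i) (I p i))) + (c * α) • v) := by
  refine ⟨?_, ?_, ?_⟩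
  · intro p hp i
    exact le_trans (hpmin i) (le_max_left _ _)
  · intro p p' hp hpp' i
    have h := hmono p p' hp hpp' i
    exact max_le_max le_rfl (min_le_min le_rfl h)
  · intro p hp α hα i
    have h := hcontr p hp α hα i
    have hd : 0 ≤ c * α * v i := mul_nonneg (mul_nonneg hc0 hα.le) (hv i).le
    simp only [Pi.add_apply, Pi.smul_apply, smul_eq_mul] at h ⊢
    cases le_total (pmax i) (I (p + α • v) i) with
    | inl h1 =>
      rw [min_eq_left h1]
      cases le_total (pmax i) (I p i) with
      | inl h2 => rw [min_eq_left h2]; linarith [le_max_right (pmin i) (pmax i)]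
      | inr h2 =>
        rw [min_eq_right h2]
        cases le_total (pmin i) (I p i) with
        | inl h3 =>
          rw [max_eq_right h3]
          have : I (p + α • v) i ≤ I p i + c * α * v i := h
          have := max_le_max (le_refl (pmin i)) (le_trans h1 this)
          linarith [le_max_right (pmin i) (pmax i), max_le (le_trans (hminmax i) (by linarith : pmax i ≤ I p i + c * α * v i)) (by linarith : pmax i ≤ I p i + c * α * v i)]
        | inr h3 =>
          rw [max_eq_left h3, max_eq_right (hminmax i)]
          linarith
    | inr h1 =>
      rw [min_eq_right h1]
      cases le_total (pmin i) (I (p + α • v) i) with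
      | inl h2 =>
        rw [max_eq_right h2]
        have h3 : I (p + α • v) i - c * α * v i ≤ I p i := by linarith
        have h4 : I (p + α • v) i - c * α * v i ≤ pmax i := by linarith
        have : I (p + α • v) i - c * α * v i ≤ min (pmax i) (I p i) := le_min h4 h3
        linarith [le_max_right (pmin i) (min (pmax i) (I p i))]
      | inr h2 =>
        rw [max_eq_left h2]
        linarith [le_max_left (pmin i) (min (pmax i) (I p i))]
end

section
/- Let c ∈ ℝ^n with c_i > 0 for all i and let P > 0. Suppose μ ∈ ℝ satisfies Σ_{i=1}^n max(μ − c_i, 0) = P, and define p*_i = max(μ − c_i, 0). Then p* is the unique maximizer of the function p ↦ Σ_{i=1}^n log(1 + p_i / c_i) over the feasible set {p ∈ ℝ^n : p_i ≥ 0 for all i, Σ_{i=1}^n p_i ≤ P}. -/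
open scoped BigOperators

lemma log_grad_le {a b : ℝ} (ha : 0 < a) (hb : 0 < b) :
    Real.log a - Real.log b ≤ (a - b) / b := by
  rw [← Real.log_div ha.ne' hb.ne']
  have h := Real.log_le_sub_one_of_pos (div_pos ha hb)
  have : a / b - 1 = (a - b) / b := by field_simp
  linarith

lemma log_grad_lt {a b : ℝ} (ha : 0 < a) (hb : 0 < b) (hne : a ≠ b) :
    Real.log a - Real.log b < (a - b) / b := by
  rw [← Real.log_div ha.ne' hb.ne']
  have hne1 : a / b ≠ 1 := fun h => hne ((div_eq_one_iff_eq hb.ne').mp h)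
  have h := Real.log_lt_sub_one_of_pos (div_pos ha hb) hne1
  have : a / b - 1 = (a - b) / b := by field_simp
  linarith

/-- The water-filling allocation `p*_i = max (μ - c_i) 0` is the unique maximizer
of the rate `∑ i, log (1 + p_i / c_i)` over the power simplex. -/
theorem stmt5 (n : ℕ) (c : Fin n → ℝ) (hc : ∀ i, 0 < c i) (P : ℝ) (hP : 0 < P)
    (μ : ℝ) (hμ : ∑ i, max (μ - c i) 0 = P) :
    (∀ i, 0 ≤ max (μ - c i) 0) ∧ (∑ i, max (μ - c i) 0 ≤ P) ∧
    ∀ p : Fin n → ℝ, (∀ i, 0 ≤ p i) → ∑ i, p i ≤ P →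
      p ≠ (fun i => max (μ - c i) 0) →
      ∑ i, Real.log (1 + p i / c i) <
        ∑ i, Real.log (1 + max (μ - c i) 0 / c i) := by
  set q : Fin n → ℝ := fun i => max (μ - c i) 0 with hqdef
  have hq0 : ∀ i, 0 ≤ q i := fun i => le_max_right _ _
  have hμpos : 0 < μ := by
    by_contra h
    push_neg at h
    have hz : ∑ i, q i = 0 :=
      Finset.sum_eq_zero fun i _ => max_eq_right (by have := hc i; simp; linarith)
    rw [hz] at hμ; linarith
  have hcq : ∀ i, μ ≤ c i + q i := by
    intro i
    rcases le_total (μ - c i) 0 with h | h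
    · have : q i = 0 := max_eq_right h
      rw [this]; linarith
    · have : q i = μ - c i := max_eq_left h
      rw [this]; linarith
  have hcqpos : ∀ i, 0 < c i + q i := fun i => lt_of_lt_of_le hμpos (hcq i)
  refine ⟨hq0, le_of_eq hμ, ?_⟩
  intro p hp hsum hne
  have hlog : ∀ (r : Fin n → ℝ), (∀ i, 0 ≤ r i) →
      ∑ i, Real.log (1 + r i / c i) = ∑ i, (Real.log (c i + r i) - Real.log (c i)) := by
    intro r hr
    refine Finset.sum_congr rfl fun i _ => ?_
    have hci := hc i
    rw [show (1 : ℝ) + r i / c i = (c i + r i) / c i by field_simp,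
      Real.log_div (by have := hr i; positivity) hci.ne']
  rw [hlog p hp, hlog q hq0]
  have keyle : ∀ i, Real.log (c i + p i) - Real.log (c i + q i) ≤ (p i - q i) / μ := by
    intro i
    have h1 := log_grad_le (a := c i + p i) (b := c i + q i)
      (by have := hc i; have := hp i; linarith) (hcqpos i)
    have heq : c i + p i - (c i + q i) = p i - q i := by ring
    rw [heq] at h1
    refine h1.trans ?_
    rcases le_or_gt (μ - c i) 0 with h | h
    · have hqi : q i = 0 := max_eq_right h
      rw [hqi, sub_zero, add_zero]
      have hci := hc i
      have hmc : μ ≤ c i := by linarith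
      gcongr
      exact hp i
    · have : c i + q i = μ := by
        have : q i = μ - c i := max_eq_left h.le
        rw [this]; ring
      rw [this]
  have keylt : ∀ i, p i ≠ q i →
      Real.log (c i + p i) - Real.log (c i + q i) < (p i - q i) / μ := by
    intro i hnei
    have h1 := log_grad_lt (a := c i + p i) (b := c i + q i)
      (by have := hc i; have := hp i; linarith) (hcqpos i)
      (by intro h; exact hnei (by linarith))
    have heq : c i + p i - (c i + q i) = p i - q i := by ring
    rw [heq] at h1
    refine h1.trans_le ?_
    rcases le_or_gt (μ - c i) 0 with h | h
    · have hqi : q i = 0 := max_eq_right h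
      rw [hqi, sub_zero, add_zero]
      have hci := hc i
      have hmc : μ ≤ c i := by linarith
      gcongr
      exact hp i
    · have : c i + q i = μ := by
        have : q i = μ - c i := max_eq_left h.le
        rw [this]; ring
      rw [this]
  obtain ⟨j, hj⟩ : ∃ j, p j ≠ q j := by
    by_contra h
    push_neg at h
    exact hne (funext h)
  have h1 : ∑ i, (Real.log (c i + p i) - Real.log (c i + q i)) < ∑ i, (p i - q i) / μ :=
    Finset.sum_lt_sum (fun i _ => keyle i) ⟨j, Finset.mem_univ j, keylt j hj⟩
  have h2 : ∑ i, (p i - q i) / μ ≤ 0 := by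
    have he : ∑ i, (p i - q i) / μ = (∑ i, p i - ∑ i, q i) / μ := by
      rw [← Finset.sum_div, Finset.sum_sub_distrib]
    rw [he]
    apply div_nonpos_of_nonpos_of_nonneg
    · linarith
    · exact hμpos.le
  have h3 : ∑ i, (Real.log (c i + p i) - Real.log (c i + q i)) < 0 := lt_of_lt_of_le h1 h2
  simp only [Finset.sum_sub_distrib] at h3 ⊢
  linarith
end

section
/- Let M′ be a real n×n matrix with unit diagonal (M′_{ii} = 1) and nonnegative off-diagonal entries, such that for every i both Σ_{j≠i} M′_{ij} < 1 and Σ_{j≠i} M′_{ji} < 1, and let Q ⊆ ℝ^n be a nonempty compact convex set. Then the variational inequality VI(Q, F) with the affine map F(p) = M′ p has exactly one solution: there is a unique p* ∈ Q with ⟨M′ p*, p − p*⟩ ≥ 0 for all p ∈ Q. -/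
/-!
Each cross term satisfies `M i j * x i * x j ≥ -M i j * (x i ^ 2 + x j ^ 2) / 2`, so
`⟪M x, x⟫ ≥ ∑ i, (1 - (r i + s i) / 2) * x i ^ 2 ≥ c * ‖x‖ ^ 2` with `c > 0`, where `r i, s i < 1`
are the off-diagonal row and column sums: the form `(u, v) ↦ ⟪M u, v⟫` is coercive. Stampacchia's
argument then applies: for small `γ > 0` the map `p ↦ P (p - γ • M p)`, with `P` the
(nonexpansive) metric projection onto `Q`, is a contraction whose fixed point solves the
variational inequality, and coercivity forces any two solutions to coincide.
-/

open Matrix InnerProductSpace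
open scoped InnerProductSpace NNReal

section Stampacchia

variable {E : Type*} [NormedAddCommGroup E] [InnerProductSpace ℝ E]

theorem exists_mem_forall_real_inner_sub_le_zero {K : Set E} (hne : K.Nonempty)
    (hK : IsComplete K) (hcv : Convex ℝ K) (u : E) :
    ∃ v ∈ K, ∀ w ∈ K, ⟪u - v, w - v⟫_ℝ ≤ 0 := by
  obtain ⟨v, hv, hmin⟩ := exists_norm_eq_iInf_of_complete_convex hne hK hcv u
  exact ⟨v, hv, (norm_eq_iInf_iff_real_inner_le_zero hcv hv).mp hmin⟩

theorem norm_sub_le_of_real_inner_sub_le_zero {u v a b : E} (ha : ⟪u - a, b - a⟫_ℝ ≤ 0)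
    (hb : ⟪v - b, a - b⟫_ℝ ≤ 0) : ‖a - b‖ ≤ ‖u - v‖ := by
  have hsq : ‖a - b‖ ^ 2 ≤ ⟪u - v, a - b⟫_ℝ := by
    have : ⟪u - a, b - a⟫_ℝ + ⟪v - b, a - b⟫_ℝ = ‖a - b‖ ^ 2 - ⟪u - v, a - b⟫_ℝ := by
      rw [← real_inner_self_eq_norm_sq]
      simp only [inner_sub_left, inner_sub_right]
      ring
    linarith
  nlinarith [real_inner_le_norm (u - v) (a - b), norm_nonneg (a - b), norm_nonneg (u - v)]

theorem exists_norm_sub_smul_le (f : E →L[ℝ] E) {c : ℝ} (hc : 0 < c)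
    (hf : ∀ x, c * ‖x‖ * ‖x‖ ≤ ⟪f x, x⟫_ℝ) :
    ∃ γ > (0 : ℝ), ∃ k : ℝ≥0, k < 1 ∧ ∀ x, ‖x - γ • f x‖ ≤ k * ‖x‖ := by
  set L := max ‖f‖ c
  have hL : 0 < L := lt_max_of_lt_right hc
  set γ := c / L ^ 2
  have hγ : 0 < γ := by positivity
  set t := γ * c
  have ht : 0 < t := by positivity
  have ht1 : t ≤ 1 := by
    have hcL : c / L ≤ 1 := (div_le_one hL).mpr (le_max_right _ _)
    calc t = (c / L) ^ 2 := by simp only [t, γ]; ring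
      _ ≤ 1 := pow_le_one₀ (by positivity) hcL
  -- `‖x - γ • f x‖ ^ 2 ≤ (1 - t) * ‖x‖ ^ 2`, and `1 - t / 2` bounds `√(1 - t)`
  refine ⟨γ, hγ, ⟨1 - t / 2, by linarith⟩, ?_, fun x => ?_⟩
  · exact NNReal.coe_lt_coe.mp (show 1 - t / 2 < 1 by linarith)
  have hfx : ‖f x‖ ≤ L * ‖x‖ :=
    (f.le_opNorm x).trans (mul_le_mul_of_nonneg_right (le_max_left _ _) (norm_nonneg x))
  have hsq : ‖x - γ • f x‖ ^ 2 ≤ ((1 - t / 2) * ‖x‖) ^ 2 := calc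
    ‖x - γ • f x‖ ^ 2 = ‖x‖ ^ 2 - 2 * γ * ⟪f x, x⟫_ℝ + γ ^ 2 * ‖f x‖ ^ 2 := by
      rw [norm_sub_sq_real, real_inner_smul_right, norm_smul, Real.norm_of_nonneg hγ.le,
        real_inner_comm]
      ring
    _ ≤ ‖x‖ ^ 2 - 2 * γ * (c * ‖x‖ * ‖x‖) + γ ^ 2 * (L * ‖x‖) ^ 2 := by
      gcongr
      exact hf x
    _ = (1 - t) * ‖x‖ ^ 2 := by
      simp only [t, γ]
      field_simp
      ring
    _ ≤ ((1 - t / 2) * ‖x‖) ^ 2 := by nlinarith [sq_nonneg (t / 2 * ‖x‖)]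
  exact (pow_le_pow_iff_left₀ (norm_nonneg _) (mul_nonneg (by linarith) (norm_nonneg x))
    two_ne_zero).mp hsq

namespace IsCoercive

variable {B : E →L[ℝ] E →L[ℝ] ℝ}

theorem eq_of_apply_sub_nonneg (hB : IsCoercive B) {u v : E} (huv : 0 ≤ B u (v - u))
    (hvu : 0 ≤ B v (u - v)) : u = v := by
  obtain ⟨c, hc, hcoer⟩ := hB
  have hle : c * ‖u - v‖ * ‖u - v‖ ≤ 0 := calc
    c * ‖u - v‖ * ‖u - v‖ ≤ B (u - v) (u - v) := hcoer (u - v)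
    _ = -B u (v - u) - B v (u - v) := by
      simp only [map_sub, _root_.sub_apply]
      ring
    _ ≤ 0 := by linarith
  by_contra h
  have hpos : 0 < ‖u - v‖ := norm_pos_iff.mpr (sub_ne_zero.mpr h)
  nlinarith [mul_pos (mul_pos hc hpos) hpos]

variable [CompleteSpace E]

theorem exists_mem_forall_apply_sub_nonneg (hB : IsCoercive B) {K : Set E} (hne : K.Nonempty)
    (hK : IsComplete K) (hcv : Convex ℝ K) : ∃ u ∈ K, ∀ v ∈ K, 0 ≤ B u (v - u) := by
  obtain ⟨c, hc, hcoer⟩ := hB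
  set f := continuousLinearMapOfBilin (𝕜 := ℝ) B
  have hf : ∀ u v, ⟪f u, v⟫_ℝ = B u v := continuousLinearMapOfBilin_apply B
  obtain ⟨γ, hγ, k, hk, hcontr⟩ :=
    exists_norm_sub_smul_le f hc fun x => (hf x x).symm ▸ hcoer x
  choose P hPK hP using exists_mem_forall_real_inner_sub_le_zero hne hK hcv
  set T := fun p => P (p - γ • f p)
  have hT : ContractingWith k T := by
    refine ⟨hk, LipschitzWith.of_dist_le_mul fun p q => ?_⟩
    rw [dist_eq_norm, dist_eq_norm]
    calc ‖T p - T q‖ ≤ ‖(p - γ • f p) - (q - γ • f q)‖ :=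
          norm_sub_le_of_real_inner_sub_le_zero (hP _ _ (hPK _)) (hP _ _ (hPK _))
      _ = ‖(p - q) - γ • f (p - q)‖ := by rw [map_sub, smul_sub, sub_sub_sub_comm]
      _ ≤ k * ‖p - q‖ := hcontr _
  have : Nonempty E := ⟨0⟩
  set u := hT.fixedPoint T
  have hu : P (u - γ • f u) = u := hT.fixedPoint_isFixedPt
  refine ⟨u, hu ▸ hPK _, fun v hv => ?_⟩
  have := hP (u - γ • f u) v hv
  rw [hu, sub_sub_cancel_left, inner_neg_left, real_inner_smul_left, hf] at this
  nlinarith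

theorem existsUnique_mem_forall_apply_sub_nonneg (hB : IsCoercive B) {K : Set E}
    (hne : K.Nonempty) (hK : IsComplete K) (hcv : Convex ℝ K) :
    ∃! u, u ∈ K ∧ ∀ v ∈ K, 0 ≤ B u (v - u) := by
  obtain ⟨u, hu, hsol⟩ := hB.exists_mem_forall_apply_sub_nonneg hne hK hcv
  exact ⟨u, ⟨hu, hsol⟩, fun v ⟨hv, hvsol⟩ => hB.eq_of_apply_sub_nonneg (hvsol u hu) (hsol v hv)⟩

end IsCoercive

end Stampacchia

theorem exists_pos_forall_le_of_forall_pos {ι : Type*} [Finite ι] {d : ι → ℝ}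
    (hd : ∀ i, 0 < d i) : ∃ c > 0, ∀ i, c ≤ d i := by
  cases isEmpty_or_nonempty ι
  · exact ⟨1, one_pos, isEmptyElim⟩
  · obtain ⟨i₀, hi₀⟩ := Finite.exists_min d
    exact ⟨d i₀, hd i₀, hi₀⟩

namespace Matrix

variable {ι : Type*} [Fintype ι] [DecidableEq ι]

theorem sum_diag_sub_offDiag_mul_sq_le_mulVec_dotProduct (M : Matrix ι ι ℝ)
    (hoff : ∀ i j, i ≠ j → 0 ≤ M i j) (x : ι → ℝ) :
    ∑ i, (M i i - (∑ j ∈ Finset.univ.filter (· ≠ i), M i j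
      + ∑ j ∈ Finset.univ.filter (· ≠ i), M j i) / 2) * x i ^ 2 ≤ M *ᵥ x ⬝ᵥ x := by
  simp only [Finset.filter_ne']
  have hcross : ∀ i, ∀ j ∈ Finset.univ.erase i,
      -(M i j / 2 * x i ^ 2) - M i j / 2 * x j ^ 2 ≤ M i j * x j * x i := fun i j hj => by
    nlinarith [mul_nonneg (hoff i j (Finset.ne_of_mem_erase hj).symm) (sq_nonneg (x i + x j))]
  have hswap : ∑ i, ∑ j ∈ Finset.univ.erase i, M i j / 2 * x j ^ 2
      = ∑ i, ∑ j ∈ Finset.univ.erase i, M j i / 2 * x i ^ 2 :=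
    Finset.sum_comm' (by simp [ne_comm])
  calc _ = ∑ i, (M i i * x i ^ 2
          + ∑ j ∈ Finset.univ.erase i, (-(M i j / 2 * x i ^ 2) - M i j / 2 * x j ^ 2)) := by
        simp only [sub_mul, add_div, add_mul, Finset.sum_div, Finset.sum_mul,
          Finset.sum_sub_distrib, Finset.sum_add_distrib, Finset.sum_neg_distrib, hswap]
        ring
    _ ≤ ∑ i, (M i i * x i ^ 2 + ∑ j ∈ Finset.univ.erase i, M i j * x j * x i) := by
        gcongr with i _ j hj
        exact hcross i j hj
    _ = M *ᵥ x ⬝ᵥ x := by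
        simp only [dotProduct, mulVec, Finset.sum_mul]
        refine Finset.sum_congr rfl fun i _ => ?_
        rw [← Finset.add_sum_erase _ _ (Finset.mem_univ i)]
        ring

theorem exists_pos_mul_dotProduct_self_le_mulVec_dotProduct (M : Matrix ι ι ℝ)
    (hdiag : ∀ i, M i i = 1) (hoff : ∀ i j, i ≠ j → 0 ≤ M i j)
    (hrow : ∀ i, ∑ j ∈ Finset.univ.filter (· ≠ i), M i j < 1)
    (hcol : ∀ i, ∑ j ∈ Finset.univ.filter (· ≠ i), M j i < 1) :
    ∃ c > 0, ∀ x, c * (x ⬝ᵥ x) ≤ M *ᵥ x ⬝ᵥ x := by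
  obtain ⟨c, hc, hcle⟩ := exists_pos_forall_le_of_forall_pos (d := fun i => M i i -
    (∑ j ∈ Finset.univ.filter (· ≠ i), M i j + ∑ j ∈ Finset.univ.filter (· ≠ i), M j i) / 2)
    fun i => by linarith [hdiag i, hrow i, hcol i]
  refine ⟨c, hc, fun x => le_trans ?_ (sum_diag_sub_offDiag_mul_sq_le_mulVec_dotProduct M hoff x)⟩
  simp only [dotProduct, Finset.mul_sum, ← sq]
  exact Finset.sum_le_sum fun i _ => mul_le_mul_of_nonneg_right (hcle i) (sq_nonneg _)

end Matrix

/-- The affine variational inequality `VI(Q, p ↦ M′ p)` with a unit-diagonal,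
nonnegative, row- and column-diagonally-dominant matrix `M′` on a nonempty
compact convex set has exactly one solution. -/
theorem stmt13 (n : ℕ) (M : Matrix (Fin n) (Fin n) ℝ)
    (hdiag : ∀ i, M i i = 1) (hoff : ∀ i j, i ≠ j → 0 ≤ M i j)
    (hrow : ∀ i, ∑ j ∈ Finset.univ.filter (· ≠ i), M i j < 1)
    (hcol : ∀ i, ∑ j ∈ Finset.univ.filter (· ≠ i), M j i < 1)
    (Q : Set (Fin n → ℝ)) (hQne : Q.Nonempty) (hQcp : IsCompact Q)
    (hQcv : Convex ℝ Q) :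
    ∃! pstar : Fin n → ℝ, pstar ∈ Q ∧
      ∀ p ∈ Q, 0 ≤ (M.mulVec pstar) ⬝ᵥ (p - pstar) := by
  obtain ⟨c, hc, hM⟩ :=
    exists_pos_mul_dotProduct_self_le_mulVec_dotProduct M hdiag hoff hrow hcol
  -- `Fin n → ℝ` carries the sup norm, so the problem is moved to `EuclideanSpace ℝ (Fin n)`
  set B := (innerSL ℝ).comp (toEuclideanCLM (𝕜 := ℝ) M)
  have hB : ∀ u v : EuclideanSpace ℝ (Fin n), B u v = M *ᵥ u.ofLp ⬝ᵥ v.ofLp := fun u v => by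
    simp [B, EuclideanSpace.inner_eq_star_dotProduct, dotProduct_comm]
  have hBc : IsCoercive B := ⟨c, hc, fun u => by
    rw [hB, mul_assoc, ← real_inner_self_eq_norm_mul_norm, EuclideanSpace.inner_eq_star_dotProduct]
    simpa using hM u.ofLp⟩
  have hsol := hBc.existsUnique_mem_forall_apply_sub_nonneg (hQne.image (WithLp.toLp 2))
    (hQcp.image (PiLp.continuous_toLp 2 _)).isComplete
    (hQcv.linear_image (WithLp.linearEquiv 2 ℝ (Fin n → ℝ)).symm.toLinearMap)
  refine (WithLp.equiv 2 (Fin n → ℝ)).symm.existsUnique_congr (fun p => ?_) |>.mpr hsol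
  rw [WithLp.equiv_symm_apply, (WithLp.toLp_injective 2).mem_set_image, Set.forall_mem_image]
  simp [hB]
end

section
/- Let Q ⊆ ℝ^K be a nonempty closed convex set, let F : ℝ^K → ℝ^K be monotone on Q, let φ : ℝ^K → ℝ be differentiable, and let ε > 0. Suppose s ∈ Q solves VI(Q, F), and suppose p ∈ Q solves the perturbed variational inequality VI(Q, F + ε∇φ), i.e., ⟨F(p) + ε∇φ(p), y − p⟩ ≥ 0 for all y ∈ Q. Then ⟨∇φ(p), s − p⟩ ≥ 0. -/
open scoped RealInnerProductSpace

/-- If `s` solves `VI(Q, F)` with `F` monotone, and `p` solves the perturbed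
problem `VI(Q, F + ε∇φ)`, then `⟨∇φ(p), s − p⟩ ≥ 0`. -/
theorem stmt14 (K : ℕ) (Q : Set (EuclideanSpace ℝ (Fin K))) (hQne : Q.Nonempty)
    (hQcl : IsClosed Q) (hQcv : Convex ℝ Q)
    (F : EuclideanSpace ℝ (Fin K) → EuclideanSpace ℝ (Fin K))
    (hF : ∀ x ∈ Q, ∀ y ∈ Q, 0 ≤ ⟪F x - F y, x - y⟫)
    (φ : EuclideanSpace ℝ (Fin K) → ℝ)
    (g : EuclideanSpace ℝ (Fin K) → EuclideanSpace ℝ (Fin K))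
    (hg : ∀ x, HasGradientAt φ (g x) x)
    (ε : ℝ) (hε : 0 < ε)
    (s : EuclideanSpace ℝ (Fin K)) (hs : s ∈ Q)
    (hsol : ∀ x ∈ Q, 0 ≤ ⟪F s, x - s⟫)
    (p : EuclideanSpace ℝ (Fin K)) (hp : p ∈ Q)
    (hpsol : ∀ y ∈ Q, 0 ≤ ⟪F p + ε • g p, y - p⟫) :
    0 ≤ ⟪g p, s - p⟫ := by
  have h1 := hpsol s hs
  have h2 := hsol p hp
  have h3 := hF p hp s hs
  rw [inner_add_left, real_inner_smul_left] at h1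
  rw [inner_sub_left] at h3
  have h4 : ⟪F s, p - s⟫ = -⟪F s, s - p⟫ := by
    rw [← inner_neg_right]; congr 1; abel
  have h5 : ⟪F p, p - s⟫ = -⟪F p, s - p⟫ := by
    rw [← inner_neg_right]; congr 1; abel
  rw [h4] at h2
  rw [h4, h5] at h3
  nlinarith
end

section
/- Let Q ⊆ ℝ^K be a nonempty closed convex set, let F : ℝ^K → ℝ^K be monotone on Q, let φ : ℝ^K → ℝ be convex and differentiable, and let ε > 0. If p ∈ Q solves the perturbed variational inequality VI(Q, F + ε∇φ), then φ(p) ≤ φ(s) for every solution s of VI(Q, F); that is, p minimizes the merit function φ over the solution set SOL(Q, F). -/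
/-!
Test the two variational inequalities against each other. Monotonicity of `F` turns
`s ∈ SOL(Q, F)` into Minty's inequality `⟪F p, s - p⟫ ≤ 0`, so testing the perturbed
inequality at `s` leaves `ε ⟪∇φ p, s - p⟫ ≥ 0`; the gradient inequality of the convex
function `φ` then gives `φ s - φ p ≥ ⟪∇φ p, s - p⟫ ≥ 0`.
-/

open scoped RealInnerProductSpace

open AffineMap in
theorem ConvexOn.apply_sub_le_sub_of_hasFDerivAt {E : Type*} [NormedAddCommGroup E]
    [NormedSpace ℝ E] {S : Set E} {f : E → ℝ} {f' : E →L[ℝ] ℝ} {x y : E}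
    (hf : ConvexOn ℝ S f) (hx : x ∈ S) (hy : y ∈ S) (hf' : HasFDerivAt f f' x) :
    f' (y - x) ≤ f y - f x := by
  have hline : ConvexOn ℝ (lineMap x y ⁻¹' S) (f ∘ lineMap x y) :=
    hf.comp_affineMap (lineMap x y)
  have hderiv : HasDerivAt (f ∘ lineMap x y) (f' (y - x)) (0 : ℝ) :=
    (lineMap_apply_zero x y (k := ℝ) ▸ hf').comp_hasDerivAt 0 hasDerivAt_lineMap
  simpa [slope] using hline.le_slope_of_hasDerivAt (x := 0) (y := 1)
    (by simpa using hx) (by simpa using hy) one_pos hderiv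

theorem ConvexOn.inner_sub_le_sub_of_hasGradientAt {E : Type*} [NormedAddCommGroup E]
    [InnerProductSpace ℝ E] [CompleteSpace E] {S : Set E} {f : E → ℝ} {f' x y : E}
    (hf : ConvexOn ℝ S f) (hx : x ∈ S) (hy : y ∈ S) (hf' : HasGradientAt f f' x) :
    ⟪f', y - x⟫ ≤ f y - f x :=
  hf.apply_sub_le_sub_of_hasFDerivAt hx hy (hasGradientAt_iff_hasFDerivAt.mp hf')

/-- Minty's lemma: for monotone `F`, a solution of `VI(Q, F)` solves the dual (Minty) problem. -/
theorem inner_sub_nonpos_of_monotone_of_solves {E : Type*} [NormedAddCommGroup E]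
    [InnerProductSpace ℝ E] {Q : Set E} {F : E → E}
    (hF : ∀ x ∈ Q, ∀ y ∈ Q, 0 ≤ ⟪F x - F y, x - y⟫) {s x : E} (hs : s ∈ Q) (hx : x ∈ Q)
    (hsol : ∀ y ∈ Q, 0 ≤ ⟪F s, y - s⟫) :
    ⟪F x, s - x⟫ ≤ 0 := by
  have hmono := hF x hx s hs
  have hsx := hsol x hx
  rw [inner_sub_left] at hmono
  rw [← neg_sub x s, inner_neg_right]
  linarith

theorem stmt15_general (K : ℕ) (Q : Set (EuclideanSpace ℝ (Fin K)))
    (F : EuclideanSpace ℝ (Fin K) → EuclideanSpace ℝ (Fin K))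
    (hF : ∀ x ∈ Q, ∀ y ∈ Q, 0 ≤ ⟪F x - F y, x - y⟫)
    (φ : EuclideanSpace ℝ (Fin K) → ℝ) (hφ : ConvexOn ℝ Set.univ φ)
    (g : EuclideanSpace ℝ (Fin K) → EuclideanSpace ℝ (Fin K))
    (hg : ∀ x, HasGradientAt φ (g x) x)
    (ε : ℝ) (hε : 0 < ε)
    (p : EuclideanSpace ℝ (Fin K)) (hp : p ∈ Q)
    (hpsol : ∀ y ∈ Q, 0 ≤ ⟪F p + ε • g p, y - p⟫) :
    ∀ s ∈ Q, (∀ x ∈ Q, 0 ≤ ⟪F s, x - s⟫) → φ p ≤ φ s := by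
  intro s hs hssol
  have hminty : ⟪F p, s - p⟫ ≤ 0 := inner_sub_nonpos_of_monotone_of_solves hF hs hp hssol
  have hperturbed : 0 ≤ ⟪F p, s - p⟫ + ε * ⟪g p, s - p⟫ := by
    simpa only [inner_add_left, real_inner_smul_left] using hpsol s hs
  have hdescent : 0 ≤ ⟪g p, s - p⟫ := nonneg_of_mul_nonneg_right (by linarith) hε
  have hgrad := hφ.inner_sub_le_sub_of_hasGradientAt (y := s) trivial trivial (hg p)
  linarith

/-- A solution of the perturbed problem `VI(Q, F + ε∇φ)` minimizes the convex
merit function `φ` over the solution set `SOL(Q, F)` of the monotone problem. -/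
theorem stmt15 (K : ℕ) (Q : Set (EuclideanSpace ℝ (Fin K))) (hQne : Q.Nonempty)
    (hQcl : IsClosed Q) (hQcv : Convex ℝ Q)
    (F : EuclideanSpace ℝ (Fin K) → EuclideanSpace ℝ (Fin K))
    (hF : ∀ x ∈ Q, ∀ y ∈ Q, 0 ≤ ⟪F x - F y, x - y⟫)
    (φ : EuclideanSpace ℝ (Fin K) → ℝ) (hφ : ConvexOn ℝ Set.univ φ)
    (g : EuclideanSpace ℝ (Fin K) → EuclideanSpace ℝ (Fin K))
    (hg : ∀ x, HasGradientAt φ (g x) x)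
    (ε : ℝ) (hε : 0 < ε)
    (p : EuclideanSpace ℝ (Fin K)) (hp : p ∈ Q)
    (hpsol : ∀ y ∈ Q, 0 ≤ ⟪F p + ε • g p, y - p⟫) :
    ∀ s ∈ Q, (∀ x ∈ Q, 0 ≤ ⟪F s, x - s⟫) → φ p ≤ φ s :=
  stmt15_general K Q F hF φ hφ g hg ε hε p hp hpsol
end

section
/- Let Q ⊆ ℝ^K be a nonempty closed convex set, let F : ℝ^K → ℝ^K be monotone on Q, let φ : ℝ^K → ℝ be convex and differentiable, and let ε > 0 and δ ≥ 0. Suppose s ∈ Q solves VI(Q, F), and suppose p ∈ Q is a δ-inexact solution of the perturbed problem, i.e., ⟨F(p) + ε∇φ(p), y − p⟩ ≥ −δ for all y ∈ Q. Then ε·⟨∇φ(p), s − p⟩ ≥ −δ, and consequently φ(p) ≤ φ(s) + δ/ε. -/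
/-!
For `p ∈ Q`, testing the perturbed inequality at `y = s` gives
`⟪F p, s - p⟫ + ε ⟪∇φ p, s - p⟫ ≥ -δ`. Monotonicity together with `⟪F s, p - s⟫ ≥ 0` gives
`⟪F p, s - p⟫ ≤ 0` (Minty's inequality), which yields the first claim; the second follows from the
first-order characterisation `φ p + ⟪∇φ p, s - p⟫ ≤ φ s` of convexity.
-/

open scoped RealInnerProductSpace
open Set

theorem ConvexOn.add_fderiv_sub_le {E : Type*} [NormedAddCommGroup E] [NormedSpace ℝ E]
    {s : Set E} {f : E → ℝ} {f' : E →L[ℝ] ℝ} {x y : E} (hf : ConvexOn ℝ s f)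
    (hx : x ∈ s) (hy : y ∈ s) (hf' : HasFDerivAt f f' x) :
    f x + f' (y - x) ≤ f y := by
  let γ : ℝ →ᵃ[ℝ] E := AffineMap.lineMap x y
  have hγ0 : γ 0 = x := AffineMap.lineMap_apply_zero x y
  have hγ1 : γ 1 = y := AffineMap.lineMap_apply_one x y
  have hline : ConvexOn ℝ (γ ⁻¹' s) (f ∘ γ) := hf.comp_affineMap γ
  have hderiv : HasDerivAt (f ∘ γ) (f' (y - x)) 0 :=
    (hγ0 ▸ hf').comp_hasDerivAt (0 : ℝ) AffineMap.hasDerivAt_lineMap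
  have hslope := hline.le_slope_of_hasDerivAt (by simpa [hγ0] using hx)
    (by simpa [hγ1] using hy) zero_lt_one hderiv
  rw [slope_def_field, Function.comp_apply, Function.comp_apply, hγ0, hγ1, sub_zero,
    div_one] at hslope
  linarith

theorem ConvexOn.add_inner_gradient_sub_le {E : Type*} [NormedAddCommGroup E]
    [InnerProductSpace ℝ E] [CompleteSpace E] {s : Set E} {f : E → ℝ} {g x y : E}
    (hf : ConvexOn ℝ s f) (hx : x ∈ s) (hy : y ∈ s) (hg : HasGradientAt f g x) :
    f x + ⟪g, y - x⟫ ≤ f y := by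
  simpa using hf.add_fderiv_sub_le hx hy hg.hasFDerivAt

theorem inner_apply_sub_nonpos_of_monotone_of_solution {E : Type*} [NormedAddCommGroup E]
    [InnerProductSpace ℝ E] {Q : Set E} {F : E → E} {s p : E}
    (hF : ∀ x ∈ Q, ∀ y ∈ Q, 0 ≤ ⟪F x - F y, x - y⟫) (hs : s ∈ Q)
    (hsol : ∀ x ∈ Q, 0 ≤ ⟪F s, x - s⟫) (hp : p ∈ Q) :
    ⟪F p, s - p⟫ ≤ 0 := by
  have hmono := hF p hp s hs
  have hsp := hsol p hp
  rw [inner_sub_left] at hmono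
  rw [← neg_sub p s, inner_neg_right]
  linarith

theorem stmt16_general (K : ℕ) (Q : Set (EuclideanSpace ℝ (Fin K)))
    (F : EuclideanSpace ℝ (Fin K) → EuclideanSpace ℝ (Fin K))
    (hF : ∀ x ∈ Q, ∀ y ∈ Q, 0 ≤ ⟪F x - F y, x - y⟫)
    (φ : EuclideanSpace ℝ (Fin K) → ℝ) (hφ : ConvexOn ℝ Set.univ φ)
    (g : EuclideanSpace ℝ (Fin K) → EuclideanSpace ℝ (Fin K))
    (hg : ∀ x, HasGradientAt φ (g x) x)
    (ε δ : ℝ) (hε : 0 < ε)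
    (s : EuclideanSpace ℝ (Fin K)) (hs : s ∈ Q)
    (hsol : ∀ x ∈ Q, 0 ≤ ⟪F s, x - s⟫)
    (p : EuclideanSpace ℝ (Fin K)) (hp : p ∈ Q)
    (hpsol : ∀ y ∈ Q, -δ ≤ ⟪F p + ε • g p, y - p⟫) :
    -δ ≤ ε * ⟪g p, s - p⟫ ∧ φ p ≤ φ s + δ / ε := by
  have hminty := inner_apply_sub_nonpos_of_monotone_of_solution hF hs hsol hp
  have hgap : -δ ≤ ε * ⟪g p, s - p⟫ := by
    have hps := hpsol s hs
    rw [inner_add_left, real_inner_smul_left] at hps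
    linarith
  refine ⟨hgap, ?_⟩
  have hfirst := hφ.add_inner_gradient_sub_le (mem_univ p) (mem_univ s) (hg p)
  have hdiv : -δ / ε ≤ ⟪g p, s - p⟫ := (div_le_iff₀ hε).2 (by linarith)
  rw [neg_div] at hdiv
  linarith

/-- A `δ`-inexact solution `p` of the perturbed problem `VI(Q, F + ε∇φ)`
satisfies `ε⟨∇φ(p), s − p⟩ ≥ −δ` and `φ(p) ≤ φ(s) + δ/ε` for every solution `s`
of the monotone problem `VI(Q, F)`. -/
theorem stmt16 (K : ℕ) (Q : Set (EuclideanSpace ℝ (Fin K))) (hQne : Q.Nonempty)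
    (hQcl : IsClosed Q) (hQcv : Convex ℝ Q)
    (F : EuclideanSpace ℝ (Fin K) → EuclideanSpace ℝ (Fin K))
    (hF : ∀ x ∈ Q, ∀ y ∈ Q, 0 ≤ ⟪F x - F y, x - y⟫)
    (φ : EuclideanSpace ℝ (Fin K) → ℝ) (hφ : ConvexOn ℝ Set.univ φ)
    (g : EuclideanSpace ℝ (Fin K) → EuclideanSpace ℝ (Fin K))
    (hg : ∀ x, HasGradientAt φ (g x) x)
    (ε δ : ℝ) (hε : 0 < ε) (hδ : 0 ≤ δ)
    (s : EuclideanSpace ℝ (Fin K)) (hs : s ∈ Q)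
    (hsol : ∀ x ∈ Q, 0 ≤ ⟪F s, x - s⟫)
    (p : EuclideanSpace ℝ (Fin K)) (hp : p ∈ Q)
    (hpsol : ∀ y ∈ Q, -δ ≤ ⟪F p + ε • g p, y - p⟫) :
    -δ ≤ ε * ⟪g p, s - p⟫ ∧ φ p ≤ φ s + δ / ε :=
  stmt16_general K Q F hF φ hφ g hg ε δ hε s hs hsol p hp hpsol
end

section
/- Let Q ⊆ ℝ^K be a nonempty closed convex set, let F : ℝ^K → ℝ^K be monotone on Q, and let τ > 0 and δ ≥ 0. Suppose s ∈ Q solves VI(Q, F), and suppose p, p₀ ∈ Q satisfy ⟨F(p) + τ(p − p₀), y − p⟩ ≥ −δ for all y ∈ Q. Then ‖p₀ − p‖² + ‖p − s‖² ≤ ‖p₀ − s‖² + 2δ/τ, and consequently ‖p − s‖² ≤ ‖p₀ − s‖² + 2δ/τ, where ‖·‖ is the Euclidean norm. -/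
open scoped RealInnerProductSpace

/-- Key inequality for the inexact regularized iteration: if `s` solves
`VI(Q, F)` with `F` monotone and `p` is a `δ`-inexact solution of the
regularized problem `VI(Q, F + τ(· − p₀))`, then
`‖p₀ − p‖² + ‖p − s‖² ≤ ‖p₀ − s‖² + 2δ/τ`, and consequently
`‖p − s‖² ≤ ‖p₀ − s‖² + 2δ/τ`. -/
theorem stmt17 (K : ℕ) (Q : Set (EuclideanSpace ℝ (Fin K))) (hQne : Q.Nonempty)
    (hQcl : IsClosed Q) (hQcv : Convex ℝ Q)
    (F : EuclideanSpace ℝ (Fin K) → EuclideanSpace ℝ (Fin K))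
    (hF : ∀ x ∈ Q, ∀ y ∈ Q, 0 ≤ ⟪F x - F y, x - y⟫)
    (τ δ : ℝ) (hτ : 0 < τ) (hδ : 0 ≤ δ)
    (s : EuclideanSpace ℝ (Fin K)) (hs : s ∈ Q)
    (hsol : ∀ x ∈ Q, 0 ≤ ⟪F s, x - s⟫)
    (p p₀ : EuclideanSpace ℝ (Fin K)) (hp : p ∈ Q) (hp₀ : p₀ ∈ Q)
    (hpsol : ∀ y ∈ Q, -δ ≤ ⟪F p + τ • (p - p₀), y - p⟫) :
    ‖p₀ - p‖ ^ 2 + ‖p - s‖ ^ 2 ≤ ‖p₀ - s‖ ^ 2 + 2 * δ / τ ∧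
    ‖p - s‖ ^ 2 ≤ ‖p₀ - s‖ ^ 2 + 2 * δ / τ := by
  have h1 := hpsol s hs
  have h2 := hF p hp s hs
  have h3 := hsol p hp
  rw [inner_add_left, real_inner_smul_left] at h1
  rw [inner_sub_left] at h2
  have hFp : ⟪F p, s - p⟫ ≤ 0 := by
    have : ⟪F s, p - s⟫ ≤ ⟪F p, p - s⟫ := by linarith
    have h4 : 0 ≤ ⟪F p, p - s⟫ := le_trans h3 this
    have : ⟪F p, s - p⟫ = -⟪F p, p - s⟫ := by
      rw [← inner_neg_right]; congr 1; abel
    linarith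
  have h5 : -δ / τ ≤ ⟪p - p₀, s - p⟫ := by
    have : -δ ≤ τ * ⟪p - p₀, s - p⟫ := by linarith
    rw [div_le_iff₀ hτ] at *
    nlinarith
  have hid : ‖p₀ - s‖ ^ 2 = ‖p₀ - p‖ ^ 2 + ‖p - s‖ ^ 2 + 2 * ⟪p₀ - p, p - s⟫ := by
    have : p₀ - s = (p₀ - p) + (p - s) := by abel
    rw [this, ← real_inner_self_eq_norm_sq, ← real_inner_self_eq_norm_sq,
      ← real_inner_self_eq_norm_sq, inner_add_add_self, real_inner_comm (p - s) (p₀ - p)]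
    ring
  have h6 : ⟪p₀ - p, p - s⟫ = ⟪p - p₀, s - p⟫ := by
    rw [← inner_neg_neg]; congr 1 <;> abel
  have key : ‖p₀ - p‖ ^ 2 + ‖p - s‖ ^ 2 ≤ ‖p₀ - s‖ ^ 2 + 2 * δ / τ := by
    rw [hid, h6]
    have h7 : -(2 * δ / τ) = 2 * (-δ / τ) := by ring
    have : -(2 * δ / τ) ≤ 2 * ⟪p - p₀, s - p⟫ := by rw [h7]; linarith
    linarith
  exact ⟨key, by nlinarith [sq_nonneg ‖p₀ - p‖]⟩
end

section
/- Let (a_n), (b_n), (c_n) be sequences of nonnegative real numbers such that Σ_{n=0}^∞ c_n < ∞ and a_{n+1} ≤ a_n − b_n + c_n for all n. Then the sequence (a_n) converges and Σ_{n=0}^∞ b_n < ∞. -/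
/-- Quasi-Fejér lemma: if nonnegative sequences satisfy
`a (n+1) ≤ a n − b n + c n` with `∑ c n < ∞`, then `a` converges and
`∑ b n < ∞`. -/
theorem stmt18 (a b c : ℕ → ℝ)
    (ha : ∀ n, 0 ≤ a n) (hb : ∀ n, 0 ≤ b n) (hc : ∀ n, 0 ≤ c n)
    (hcs : Summable c) (hrec : ∀ n, a (n + 1) ≤ a n - b n + c n) :
    (∃ L : ℝ, Filter.Tendsto a Filter.atTop (nhds L)) ∧ Summable b := by
  -- tail sums
  set R : ℕ → ℝ := fun n => ∑' k, c (k + n) with hR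
  have hRsum : ∀ n, Summable fun k => c (k + n) := fun n =>
    (summable_nat_add_iff n).2 hcs
  have hRnonneg : ∀ n, 0 ≤ R n := fun n => tsum_nonneg fun k => hc _
  have hRrec : ∀ n, R n = c n + R (n + 1) := by
    intro n
    have h0 := Summable.tsum_eq_zero_add (hRsum n)
    simp only [zero_add] at h0
    rw [hR]
    simp only [h0]
    congr 1
    apply tsum_congr
    intro k
    congr 1
    omega
  have hR0 : Filter.Tendsto R Filter.atTop (nhds 0) := by
    simpa [hR] using tendsto_sum_nat_add c
  set u : ℕ → ℝ := fun n => a n + R n with hu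
  have hanti : Antitone u := by
    apply antitone_nat_of_succ_le
    intro n
    have := hrec n
    have hRn := hRrec n
    have hbn := hb n
    simp only [hu]
    nlinarith
  have hbdd : BddBelow (Set.range u) := by
    refine ⟨0, ?_⟩
    rintro x ⟨n, rfl⟩
    exact add_nonneg (ha n) (hRnonneg n)
  have hutend : Filter.Tendsto u Filter.atTop (nhds (⨅ n, u n)) :=
    tendsto_atTop_ciInf hanti hbdd
  constructor
  · refine ⟨(⨅ n, u n) - 0, ?_⟩
    have : a = fun n => u n - R n := by
      funext n; simp [hu]
    rw [this]
    exact hutend.sub hR0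
  · apply summable_of_sum_range_le (fun n => hb n)
    intro n
    show ∑ i ∈ Finset.range n, b i ≤ a 0 + ∑' k, c k
    have key : ∀ n, a n + ∑ i ∈ Finset.range n, b i ≤ a 0 + ∑ i ∈ Finset.range n, c i := by
      intro n
      induction n with
      | zero => simp
      | succ m ih =>
        have := hrec m
        rw [Finset.sum_range_succ, Finset.sum_range_succ]
        linarith
    have h1 := key n
    have h2 : ∑ i ∈ Finset.range n, c i ≤ ∑' k, c k :=
      Summable.sum_le_tsum _ (fun i _ => hc i) hcs
    have := ha n
    linarith
end

section
/- Let Q ⊆ ℝ^K be a nonempty closed convex set, let F : ℝ^K → ℝ^K be monotone on Q, let τ > 0, and let (δ_n) be a sequence of nonnegative reals with Σ_{n=1}^∞ δ_n/τ < ∞. Suppose s ∈ Q solves VI(Q, F), and suppose (p_n) is a sequence in Q such that for every n ≥ 1 and every y ∈ Q, ⟨F(p_n) + τ(p_n − p_{n−1}), y − p_n⟩ ≥ −δ_n. Then ‖p_n − p_{n−1}‖ → 0 as n → ∞, where ‖·‖ is the Euclidean norm. -/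
open scoped RealInnerProductSpace

/-!
Testing the inexact regularized inequality at the solution `s` and adding the monotonicity of
`F` between `p_{n+1}` and `s` gives `τ ⟪p_{n+1} - p_n, p_{n+1} - s⟫ ≤ δ_{n+1}`. By the
polarization identity this is the Fejér-type estimate
`‖p_{n+1} - p_n‖² ≤ ‖p_n - s‖² - ‖p_{n+1} - s‖² + 2 δ_{n+1} / τ`, whose right-hand side
telescopes to a bounded sum. Hence `∑ ‖p_{n+1} - p_n‖²` converges and its terms tend to `0`.
-/

section InexactProximalStep

variable {E : Type*} [NormedAddCommGroup E] [InnerProductSpace ℝ E]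

lemma inner_sub_le_div_of_inexact_step {F : E → E} {s x x₀ : E} {τ δ : ℝ} (hτ : 0 < τ)
    (hmono : 0 ≤ ⟪F x - F s, x - s⟫) (hsol : 0 ≤ ⟪F s, x - s⟫)
    (hstep : -δ ≤ ⟪F x + τ • (x - x₀), s - x⟫) :
    ⟪x - x₀, x - s⟫ ≤ δ / τ := by
  have hsx : s - x = -(x - s) := (neg_sub x s).symm
  rw [hsx, inner_neg_right, inner_add_left, real_inner_smul_left] at hstep
  rw [inner_sub_left] at hmono
  rw [le_div_iff₀ hτ]
  linarith

lemma norm_sub_sq_le_of_inner_le {s x x₀ : E} {c : ℝ} (h : ⟪x - x₀, x - s⟫ ≤ c) :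
    ‖x - x₀‖ ^ 2 ≤ ‖x₀ - s‖ ^ 2 - ‖x - s‖ ^ 2 + 2 * c := by
  have hsplit := norm_add_sq_real (x₀ - x) (x - s)
  rw [sub_add_sub_cancel, ← neg_sub x x₀, norm_neg, inner_neg_left] at hsplit
  linarith

end InexactProximalStep

lemma summable_of_le_sub_succ_add {a b c : ℕ → ℝ} (ha : ∀ n, 0 ≤ a n) (hb : ∀ n, 0 ≤ b n)
    (hc : ∀ n, 0 ≤ c n) (hcs : Summable c) (hbound : ∀ n, b n ≤ a n - a (n + 1) + c n) :
    Summable b := by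
  refine summable_of_sum_range_le hb (c := a 0 + ∑' n, c n) fun n => ?_
  calc ∑ i ∈ Finset.range n, b i
      ≤ ∑ i ∈ Finset.range n, (a i - a (i + 1) + c i) :=
        Finset.sum_le_sum fun i _ => hbound i
    _ = a 0 - a n + ∑ i ∈ Finset.range n, c i := by
        rw [Finset.sum_add_distrib, Finset.sum_range_sub' a]
    _ ≤ a 0 + ∑' n, c n := by
        linarith [ha n, hcs.sum_le_tsum (Finset.range n) fun i _ => hc i]

lemma tendsto_norm_zero_of_summable_norm_sq {E : Type*} [SeminormedAddCommGroup E] {d : ℕ → E}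
    (h : Summable fun n => ‖d n‖ ^ 2) : Filter.Tendsto (fun n => ‖d n‖) Filter.atTop (nhds 0) := by
  have hsqrt := h.tendsto_atTop_zero.sqrt
  simpa only [Real.sqrt_sq (norm_nonneg _), Real.sqrt_zero] using hsqrt

theorem stmt19_general (K : ℕ) (Q : Set (EuclideanSpace ℝ (Fin K)))
    (F : EuclideanSpace ℝ (Fin K) → EuclideanSpace ℝ (Fin K))
    (hF : ∀ x ∈ Q, ∀ y ∈ Q, 0 ≤ ⟪F x - F y, x - y⟫)
    (τ : ℝ) (hτ : 0 < τ)
    (δ : ℕ → ℝ) (hδ : ∀ n, 0 ≤ δ n) (hδs : Summable (fun n => δ n / τ))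
    (s : EuclideanSpace ℝ (Fin K)) (hs : s ∈ Q)
    (hsol : ∀ x ∈ Q, 0 ≤ ⟪F s, x - s⟫)
    (p : ℕ → EuclideanSpace ℝ (Fin K)) (hp : ∀ n, p n ∈ Q)
    (hpsol : ∀ n : ℕ, ∀ y ∈ Q,
        -δ (n + 1) ≤ ⟪F (p (n + 1)) + τ • (p (n + 1) - p n), y - p (n + 1)⟫) :
    Filter.Tendsto (fun n => ‖p (n + 1) - p n‖) Filter.atTop (nhds 0) := by
  have hfejer : ∀ n, ‖p (n + 1) - p n‖ ^ 2 ≤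
      ‖p n - s‖ ^ 2 - ‖p (n + 1) - s‖ ^ 2 + 2 * (δ (n + 1) / τ) := fun n =>
    norm_sub_sq_le_of_inner_le <| inner_sub_le_div_of_inexact_step hτ
      (hF _ (hp (n + 1)) s hs) (hsol _ (hp (n + 1))) (hpsol n s hs)
  have herr : Summable fun n => 2 * (δ (n + 1) / τ) :=
    ((summable_nat_add_iff 1).mpr hδs).mul_left 2
  exact tendsto_norm_zero_of_summable_norm_sq <|
    summable_of_le_sub_succ_add (fun n => sq_nonneg ‖p n - s‖) (fun n => sq_nonneg _)
      (fun n => by have := hδ (n + 1); positivity) herr hfejer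

/-- For a sequence of `δ_n`-inexact solutions of the successively regularized
problems `VI(Q, F + τ(· − p_{n−1}))`, with `∑ δ_n/τ < ∞`, the successive
differences vanish: `‖p_n − p_{n−1}‖ → 0`. -/
theorem stmt19 (K : ℕ) (Q : Set (EuclideanSpace ℝ (Fin K))) (hQne : Q.Nonempty)
    (hQcl : IsClosed Q) (hQcv : Convex ℝ Q)
    (F : EuclideanSpace ℝ (Fin K) → EuclideanSpace ℝ (Fin K))
    (hF : ∀ x ∈ Q, ∀ y ∈ Q, 0 ≤ ⟪F x - F y, x - y⟫)
    (τ : ℝ) (hτ : 0 < τ)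
    (δ : ℕ → ℝ) (hδ : ∀ n, 0 ≤ δ n) (hδs : Summable (fun n => δ n / τ))
    (s : EuclideanSpace ℝ (Fin K)) (hs : s ∈ Q)
    (hsol : ∀ x ∈ Q, 0 ≤ ⟪F s, x - s⟫)
    (p : ℕ → EuclideanSpace ℝ (Fin K)) (hp : ∀ n, p n ∈ Q)
    (hpsol : ∀ n : ℕ, ∀ y ∈ Q,
        -δ (n + 1) ≤ ⟪F (p (n + 1)) + τ • (p (n + 1) - p n), y - p (n + 1)⟫) :
    Filter.Tendsto (fun n => ‖p (n + 1) - p n‖) Filter.atTop (nhds 0) :=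
  stmt19_general K Q F hF τ hτ δ hδ hδs s hs hsol p hp hpsol
end
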